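/- arXiv:1502.05334 — 2 statements merged into one kernel-verified Lean document; each statement's English description precedes it below -/
import Mathlib

section
/- If T is a tree with at least four vertices and no vertex of degree two, then T can be reduced to the star K_{1,3} by a sequence of steps, each of which either removes the two leaf children of a vertex of degree three or removes one leaf child of a vertex of degree greater than three. -/
/-- A finite graph on a subset of `ℕ`, allowing vertex-set changes under reductions. -/
structure FinGraph where
  verts : Finset ℕ
  Adj : ℕ → ℕ → Prop
  symm : ∀ u v, Adj u v → Adj v u
  loopless : ∀ u, ¬ Adj u u
  support : ∀ u v, Adj u v → u ∈ verts ∧ v ∈ verts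

namespace FinGraph

def neighborSet (G : FinGraph) (v : ℕ) : Set ℕ := {u | G.Adj v u}

/-- The degree of a vertex. -/
noncomputable def degree (G : FinGraph) (v : ℕ) : ℕ := (G.neighborSet v).ncard

/-- Reachability by a walk staying inside the set `S`. -/
def ReachableWithin (G : FinGraph) (S : Set ℕ) (u v : ℕ) : Prop :=
  Relation.ReflTransGen (fun a b => G.Adj a b ∧ a ∈ S ∧ b ∈ S) u v

/-- The subgraph induced on `S` is connected. -/
def ConnectedOn (G : FinGraph) (S : Set ℕ) : Prop :=
  ∀ u ∈ S, ∀ v ∈ S, G.ReachableWithin S u v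

def Connected (G : FinGraph) : Prop := G.ConnectedOn ↑G.verts

/-- 3-vertex-connectivity: more than three vertices, and connected after deleting
any two vertices. -/
def ThreeConnected (G : FinGraph) : Prop :=
  3 < G.verts.card ∧ ∀ x y : ℕ, G.ConnectedOn (↑G.verts \ {x, y})

/-- Graph isomorphism. -/
def Iso (G H : FinGraph) : Prop :=
  ∃ f : ℕ → ℕ, Set.BijOn f ↑G.verts ↑H.verts ∧
    ∀ u ∈ G.verts, ∀ v ∈ G.verts, (G.Adj u v ↔ H.Adj (f u) (f v))

/-- The configuration for a D3a reduction: a triangle `p q r` of degree-three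
vertices whose outside neighbors `p' q' r'` are three distinct vertices. -/
def D3aConfig (G : FinGraph) (p q r p' q' r' : ℕ) : Prop :=
  G.degree p = 3 ∧ G.degree q = 3 ∧ G.degree r = 3 ∧
  G.Adj p q ∧ G.Adj q r ∧ G.Adj p r ∧
  G.Adj p p' ∧ G.Adj q q' ∧ G.Adj r r' ∧
  p' ∉ ({p, q, r} : Set ℕ) ∧ q' ∉ ({p, q, r} : Set ℕ) ∧ r' ∉ ({p, q, r} : Set ℕ) ∧
  p' ≠ q' ∧ p' ≠ r' ∧ q' ≠ r'

/-- A D3a reduction from `G` to `H`: collapse such a triangle to a new vertex `t`. -/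
def D3a (G H : FinGraph) : Prop :=
  ∃ p q r p' q' r' t, G.D3aConfig p q r p' q' r' ∧ t ∉ G.verts ∧
    H.verts = (G.verts \ {p, q, r}) ∪ {t} ∧
    ∀ a b, H.Adj a b ↔
      (G.Adj a b ∧ a ∉ ({p, q, r} : Set ℕ) ∧ b ∉ ({p, q, r} : Set ℕ)) ∨
      (a = t ∧ b ∈ ({p', q', r'} : Set ℕ)) ∨
      (b = t ∧ a ∈ ({p', q', r'} : Set ℕ))

/-- The configuration for a D3b reduction: an induced path `p q r` of degree-three
vertices, all adjacent to a common apex `s`. -/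
def D3bConfig (G : FinGraph) (p q r s : ℕ) : Prop :=
  G.degree p = 3 ∧ G.degree q = 3 ∧ G.degree r = 3 ∧
  G.Adj p q ∧ G.Adj q r ∧ ¬ G.Adj p r ∧ p ≠ r ∧
  G.Adj s p ∧ G.Adj s q ∧ G.Adj s r

/-- A D3b reduction from `G` to `H`: delete the middle vertex `q` and add edge `pr`. -/
def D3b (G H : FinGraph) : Prop :=
  ∃ p q r s, G.D3bConfig p q r s ∧
    H.verts = G.verts \ {q} ∧
    ∀ a b, H.Adj a b ↔
      (G.Adj a b ∧ a ≠ q ∧ b ≠ q) ∨ (a = p ∧ b = r) ∨ (a = r ∧ b = p)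

/-- A single D3 reduction. -/
def D3Step (G H : FinGraph) : Prop := G.D3a H ∨ G.D3b H

/-- `G` is a complete graph on four vertices. -/
def IsK4 (G : FinGraph) : Prop :=
  G.verts.card = 4 ∧ ∀ u ∈ G.verts, ∀ v ∈ G.verts, u ≠ v → G.Adj u v

/-- A graph is D3-reducible if some sequence of D3 reductions takes it to `K₄`. -/
def D3Reducible (G : FinGraph) : Prop :=
  ∃ H, Relation.ReflTransGen D3Step G H ∧ H.IsK4

/-- No D3 reduction applies. -/
def Irreducible (G : FinGraph) : Prop := ¬ ∃ H, G.D3Step H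

/-- `H` is a minor of `G`, witnessed by connected, disjoint branch sets. -/
def HasMinor (G H : FinGraph) : Prop :=
  ∃ B : ℕ → Finset ℕ,
    (∀ v ∈ H.verts, (B v).Nonempty ∧ ↑(B v) ⊆ (↑G.verts : Set ℕ) ∧ G.ConnectedOn ↑(B v)) ∧
    (∀ u ∈ H.verts, ∀ v ∈ H.verts, u ≠ v → Disjoint (B u) (B v)) ∧
    (∀ u v, H.Adj u v → ∃ a ∈ B u, ∃ b ∈ B v, G.Adj a b)

def K5Graph : FinGraph where
  verts := Finset.range 5
  Adj a b := a ≠ b ∧ a < 5 ∧ b < 5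
  symm := fun _ _ h => ⟨Ne.symm h.1, h.2.2, h.2.1⟩
  loopless := fun _ h => h.1 rfl
  support := fun _ _ h => ⟨Finset.mem_range.2 h.2.1, Finset.mem_range.2 h.2.2⟩

def K33Graph : FinGraph where
  verts := Finset.range 6
  Adj a b := (a < 3 ∧ 3 ≤ b ∧ b < 6) ∨ (b < 3 ∧ 3 ≤ a ∧ a < 6)
  symm := fun _ _ h => h.elim Or.inr Or.inl
  loopless := by intro u h; rcases h with ⟨h1, h2, _⟩ | ⟨h1, h2, _⟩ <;> omega
  support := by
    intro u v h
    constructor <;> rw [Finset.mem_range] <;>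
      rcases h with ⟨h1, h2, h3⟩ | ⟨h1, h2, h3⟩ <;> omega

/-- Planarity, via Wagner's characterization: no `K₅` and no `K₃,₃` minor. -/
def Planar (G : FinGraph) : Prop := ¬ G.HasMinor K5Graph ∧ ¬ G.HasMinor K33Graph

/-- `T` is a tree: nonempty, connected, and every edge is a bridge (acyclicity). -/
def IsTreeGraph (T : FinGraph) : Prop :=
  T.verts.Nonempty ∧ T.Connected ∧
  ∀ u v, T.Adj u v → ¬ Relation.ReflTransGen
    (fun a b => T.Adj a b ∧ ¬(a = u ∧ b = v) ∧ ¬(a = v ∧ b = u)) u v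

def IsLeaf (T : FinGraph) (v : ℕ) : Prop := T.degree v = 1

/-- The edges of `G` not in the spanning tree `T` (the candidate cycle edges). -/
def cycleAdj (G T : FinGraph) (a b : ℕ) : Prop := G.Adj a b ∧ ¬ T.Adj a b

/-- `G` is a Halin graph with underlying tree `T`: `T` is a spanning tree with at
least four vertices and no degree-two vertex, the non-tree edges form a single
cycle passing exactly through the leaves of `T`, and `G` is planar (which forces
the cycle to traverse the leaves in the cyclic order of a planar embedding of `T`). -/
def IsHalinVia (G T : FinGraph) : Prop :=
  IsTreeGraph T ∧ T.verts = G.verts ∧ 4 ≤ T.verts.card ∧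
  (∀ v ∈ T.verts, T.degree v ≠ 2) ∧
  (∀ a b, T.Adj a b → G.Adj a b) ∧
  (∀ a b, cycleAdj G T a b → T.IsLeaf a ∧ T.IsLeaf b) ∧
  (∀ v ∈ G.verts, T.IsLeaf v → {u | cycleAdj G T v u}.ncard = 2) ∧
  (∀ u v, u ∈ G.verts → v ∈ G.verts → T.IsLeaf u → T.IsLeaf v →
    Relation.ReflTransGen (cycleAdj G T) u v) ∧
  G.Planar

def IsHalin (G : FinGraph) : Prop := ∃ T, IsHalinVia G T

/-- Treewidth at most `k`, via tree decompositions. -/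
def TreewidthLE (G : FinGraph) (k : ℕ) : Prop :=
  ∃ (ι : Type) (T : SimpleGraph ι) (bag : ι → Finset ℕ),
    T.IsTree ∧
    (∀ v ∈ G.verts, ∃ i, v ∈ bag i) ∧
    (∀ u v, G.Adj u v → ∃ i, u ∈ bag i ∧ v ∈ bag i) ∧
    (∀ (v : ℕ) (i j : ι) (p : T.Walk i j), p.IsPath → v ∈ bag i → v ∈ bag j →
      ∀ m ∈ p.support, v ∈ bag m) ∧
    (∀ i, (bag i).card ≤ k + 1)

/-- A face of a 3-connected planar graph, by Tutte's characterization: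
an induced cycle whose complement induces a connected subgraph. -/
def IsFaceCycle (G : FinGraph) (C : Finset ℕ) : Prop :=
  ↑C ⊆ (↑G.verts : Set ℕ) ∧ 3 ≤ C.card ∧
  (∀ v ∈ C, {u | u ∈ C ∧ G.Adj v u}.ncard = 2) ∧
  G.ConnectedOn ↑C ∧
  G.ConnectedOn (↑G.verts \ ↑C)

/-- `D` is the planar dual of the (3-connected planar) graph `G`: its vertices
correspond bijectively to the faces of `G`, with adjacency for faces sharing an edge. -/
def IsDualOf (D G : FinGraph) : Prop :=
  ∃ F : ℕ → Finset ℕ,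
    Set.InjOn F ↑D.verts ∧
    (∀ d ∈ D.verts, IsFaceCycle G (F d)) ∧
    (∀ C, IsFaceCycle G C → ∃ d ∈ D.verts, F d = C) ∧
    (∀ d e, D.Adj d e ↔ d ∈ D.verts ∧ e ∈ D.verts ∧ d ≠ e ∧
      ∃ u v, G.Adj u v ∧ u ∈ F d ∧ v ∈ F d ∧ u ∈ F e ∧ v ∈ F e)

/-- A wheel graph: a hub adjacent to all other vertices, which form a cycle. -/
def IsWheel (G : FinGraph) : Prop :=
  4 ≤ G.verts.card ∧ ∃ h ∈ G.verts,
    (∀ v ∈ G.verts, v ≠ h → G.Adj h v ∧ G.degree v = 3) ∧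
    G.ConnectedOn (↑G.verts \ {h})

/-- Glue the wheel `W` onto `G` along a shared triangular face `{a,b,c}`,
identifying the two faces vertexwise, producing `H`. -/
def GlueStep (G W H : FinGraph) : Prop :=
  ∃ a b c : ℕ, a ≠ b ∧ a ≠ c ∧ b ≠ c ∧
    IsFaceCycle G {a, b, c} ∧ IsFaceCycle W {a, b, c} ∧
    (↑G.verts ∩ ↑W.verts : Set ℕ) = {a, b, c} ∧
    H.verts = G.verts ∪ W.verts ∧
    (∀ u v, H.Adj u v ↔ G.Adj u v ∨ W.Adj u v)

/-- Graphs constructed by gluing wheels together along triangular faces.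
(Each gluing attaches one further wheel along a current triangular face; a glued
face stops being a face, so each face is used at most once, and no graph is
glued to itself.) -/
inductive GluedWheels : FinGraph → Prop
  | base (G : FinGraph) : IsWheel G → GluedWheels G
  | glue (G W H : FinGraph) : GluedWheels G → IsWheel W → GlueStep G W H → GluedWheels H

/-- Delete vertices in `S` from `G`. -/
def removeVerts (G : FinGraph) (S : Finset ℕ) : FinGraph where
  verts := G.verts \ S
  Adj a b := G.Adj a b ∧ a ∉ S ∧ b ∉ S
  symm := fun u v h => ⟨G.symm u v h.1, h.2.2, h.2.1⟩
  loopless := fun u h => G.loopless u h.1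
  support := fun u v h =>
    ⟨Finset.mem_sdiff.2 ⟨(G.support u v h.1).1, h.2.1⟩,
     Finset.mem_sdiff.2 ⟨(G.support u v h.1).2, h.2.2⟩⟩

/-- Delete the edge `uv` from `G`. -/
def deleteEdge (G : FinGraph) (u v : ℕ) : FinGraph where
  verts := G.verts
  Adj a b := G.Adj a b ∧ ¬((a = u ∧ b = v) ∨ (a = v ∧ b = u))
  symm := fun a b h => ⟨G.symm a b h.1, by tauto⟩
  loopless := fun a h => G.loopless a h.1
  support := fun a b h => G.support a b h.1

end FinGraph

namespace FinGraph
/-- One leaf-removal step: remove the two leaf children of a degree-three vertex,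
or remove one leaf child of a vertex of degree greater than three. -/
def LeafStep (T T' : FinGraph) : Prop :=
  (∃ v a b, T.degree v = 3 ∧ T.degree a = 1 ∧ T.degree b = 1 ∧ a ≠ b ∧
    T.Adj v a ∧ T.Adj v b ∧ T' = T.removeVerts {a, b}) ∨
  (∃ v a, 3 < T.degree v ∧ T.degree a = 1 ∧ T.Adj v a ∧ T' = T.removeVerts {a})

/-- `T` is a star `K_{1,3}`. -/
def IsStar13 (T : FinGraph) : Prop :=
  ∃ c x y z : ℕ, c ≠ x ∧ c ≠ y ∧ c ≠ z ∧ x ≠ y ∧ x ≠ z ∧ y ≠ z ∧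
    T.verts = {c, x, y, z} ∧
    ∀ a b, T.Adj a b ↔
      ((a = c ∧ b ∈ ({x, y, z} : Set ℕ)) ∨ (b = c ∧ a ∈ ({x, y, z} : Set ℕ)))
end FinGraph

/-!
Take a longest path `c v w …` in the tree. Its end `c` is a leaf, and so is every neighbour of
`v` off the path (it could replace `c`), so all neighbours of `v` except `w` are leaves. As no
vertex has degree two, `deg v ≥ 3`. If `deg v > 3`, remove one leaf at `v`. If `deg v = 3`, either
`w` is a leaf too and the tree is `K_{1,3}`, or `deg w ≥ 3`, which forces at least six vertices,
and we remove the two leaves at `v`. Either way we get a smaller tree without degree-two vertices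
and with at least four vertices, and we induct.
-/

namespace FinGraph

variable {T : FinGraph} {u v w x y z : ℕ}

@[simp] lemma mem_neighborSet : y ∈ T.neighborSet x ↔ T.Adj x y := Iff.rfl

lemma mem_verts_of_adj (h : T.Adj u v) : u ∈ T.verts := (T.support u v h).1

lemma ne_of_adj (h : T.Adj u v) : u ≠ v := fun e => T.loopless v (e ▸ h)

lemma neighborSet_subset_verts (T : FinGraph) (x : ℕ) : T.neighborSet x ⊆ ↑T.verts :=
  fun _ h => (T.support x _ h).2

lemma neighborSet_finite (T : FinGraph) (x : ℕ) : (T.neighborSet x).Finite :=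
  T.verts.finite_toSet.subset (T.neighborSet_subset_verts x)

lemma degree_pos_of_adj (h : T.Adj x y) : 0 < T.degree x :=
  (Set.ncard_pos (T.neighborSet_finite x)).mpr ⟨y, h⟩

lemma eq_of_adj_of_neighborSet_eq (hx : T.neighborSet x = {v}) (h : T.Adj x y) : y = v := by
  rwa [← mem_neighborSet, hx] at h

lemma neighborSet_eq_of_degree_eq_one (hd : T.degree x = 1) (h : T.Adj x v) :
    T.neighborSet x = {v} := by
  obtain ⟨y, hy⟩ := Set.ncard_eq_one.mp hd
  rwa [eq_of_adj_of_neighborSet_eq hy h]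

lemma degree_eq_one_of_neighborSet_eq (hx : T.neighborSet x = {v}) : T.degree x = 1 := by
  rw [degree, hx, Set.ncard_singleton]

lemma card_add_degree_lt {S : Finset ℕ} (hw : w ∈ T.verts) (hS : S ⊆ T.verts)
    (hSw : ∀ a ∈ S, a ≠ w ∧ ¬T.Adj w a) : S.card + T.degree w < T.verts.card := by
  have hsub : insert w (T.neighborSet w) ∪ ↑S ⊆ ↑T.verts :=
    Set.union_subset (Set.insert_subset hw (T.neighborSet_subset_verts w)) hS
  have hdisj : Disjoint (insert w (T.neighborSet w)) ↑S := by
    refine Set.disjoint_left.mpr fun a ha haS => ?_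
    obtain ⟨haw, hwa⟩ := hSw a haS
    exact ha.elim haw hwa
  have := Set.ncard_le_ncard hsub T.verts.finite_toSet
  rw [Set.ncard_union_eq hdisj ((T.neighborSet_finite w).insert w) S.finite_toSet,
    Set.ncard_insert_of_notMem (s := T.neighborSet w) (T.loopless w) (T.neighborSet_finite w),
    Set.ncard_coe_finset, Set.ncard_coe_finset] at this
  rw [degree]
  omega

lemma exists_neighborSet_eq_of_degree_eq_three (hvw : T.Adj v w) (hv : T.degree v = 3) :
    ∃ a b, a ≠ b ∧ a ≠ w ∧ b ≠ w ∧ T.neighborSet v = {w, a, b} := by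
  obtain ⟨a, b, hab, hN⟩ := Set.ncard_eq_two.mp (show (T.neighborSet v \ {w}).ncard = 2 by
    rw [Set.ncard_sdiff_singleton_of_mem (mem_neighborSet.mpr hvw)]
    rw [degree] at hv
    omega)
  refine ⟨a, b, hab, (hN ▸ Set.mem_insert a _ : a ∈ T.neighborSet v \ {w}).2,
    (hN ▸ Set.mem_insert_of_mem a rfl : b ∈ T.neighborSet v \ {w}).2, ?_⟩
  rw [← hN, Set.insert_sdiff_singleton, Set.insert_eq_of_mem (mem_neighborSet.mpr hvw)]

lemma degree_lt_card (hx : x ∈ T.verts) : T.degree x < T.verts.card := by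
  simpa using card_add_degree_lt (S := ∅) hx (Finset.empty_subset _) (by simp)

lemma Connected.exists_adj (hc : T.Connected) (h2 : 2 ≤ T.verts.card) (hx : x ∈ T.verts) :
    ∃ y, T.Adj x y := by
  obtain ⟨y, hy, hyx⟩ := Finset.exists_mem_ne h2 x
  rcases (hc x hx y hy).cases_head with h | ⟨z, hz, -⟩
  · exact absurd h.symm hyx
  · exact ⟨z, hz.1⟩

lemma Connected.verts_subset {S : Set ℕ} (hc : T.Connected) (hu : u ∈ T.verts) (huS : u ∈ S)
    (hS : ∀ x ∈ S, ∀ y, T.Adj x y → y ∈ S) : ↑T.verts ⊆ S := by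
  intro y hy
  have hreach := hc u hu y hy
  clear hy
  induction hreach with
  | refl => exact huS
  | tail _ hstep ih => exact hS _ ih _ hstep.1

def IsPathList (T : FinGraph) (l : List ℕ) : Prop :=
  l.IsChain T.Adj ∧ l.Nodup ∧ ∀ x ∈ l, x ∈ T.verts

namespace IsPathList

variable {l : List ℕ}

lemma length_le (hl : T.IsPathList l) : l.length ≤ T.verts.card := by
  rw [← List.toFinset_card_of_nodup hl.2.1]
  exact Finset.card_le_card fun x hx => hl.2.2 x (List.mem_toFinset.mp hx)

lemma cons (hl : T.IsPathList (x :: l)) (hy : T.Adj y x) (hyl : y ∉ x :: l) :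
    T.IsPathList (y :: x :: l) :=
  ⟨hl.1.cons_cons hy, List.nodup_cons.mpr ⟨hyl, hl.2.1⟩,
    List.forall_mem_cons.mpr ⟨mem_verts_of_adj hy, hl.2.2⟩⟩

lemma of_cons (hl : T.IsPathList (x :: l)) : T.IsPathList l :=
  ⟨hl.1.tail, hl.2.1.of_cons, fun y hy => hl.2.2 y (List.mem_cons_of_mem x hy)⟩

lemma reverse (hl : T.IsPathList l) : T.IsPathList l.reverse :=
  ⟨List.isChain_reverse.mpr (hl.1.imp fun a b h => T.symm a b h), List.nodup_reverse.mpr hl.2.1,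
    fun x hx => hl.2.2 x (List.mem_reverse.mp hx)⟩

end IsPathList

lemma exists_longest_pathList {l₀ : List ℕ} (h₀ : T.IsPathList l₀) :
    ∃ l, T.IsPathList l ∧ l₀.length ≤ l.length ∧
      ∀ l', T.IsPathList l' → l'.length ≤ l.length := by
  classical
  let P k := ∃ l, T.IsPathList l ∧ l.length = k
  obtain ⟨l, hl, hlen⟩ : P (Nat.findGreatest P T.verts.card) :=
    Nat.findGreatest_spec h₀.length_le ⟨l₀, h₀, rfl⟩
  refine ⟨l, hl, hlen ▸ Nat.le_findGreatest h₀.length_le ⟨l₀, h₀, rfl⟩, fun l' hl' => ?_⟩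
  exact hlen ▸ Nat.le_findGreatest hl'.length_le ⟨l', hl', rfl⟩

namespace IsTreeGraph

lemma not_adj_of_isPathList (hT : T.IsTreeGraph) {t : List ℕ} (hl : T.IsPathList (u :: v :: t))
    (hx : x ∈ t) : ¬T.Adj u x := by
  intro hux
  obtain ⟨hch, hnd, -⟩ := hl
  obtain ⟨huv, hvt⟩ := List.isChain_cons_cons.mp hch
  obtain ⟨hu, hnd⟩ := List.nodup_cons.mp hnd
  have hv : v ∉ t := (List.nodup_cons.mp hnd).1
  let E a b := T.Adj a b ∧ ¬(a = u ∧ b = x) ∧ ¬(a = x ∧ b = u)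
  have hE : (v :: t).IsChain E := hvt.imp_of_mem_imp fun a b ha hb hab =>
    ⟨hab, fun h => hu (h.1 ▸ ha), fun h => hu (h.2 ▸ hb)⟩
  have hEuv : E u v := ⟨huv, fun h => hv (h.2 ▸ hx), fun h => hu (h.2 ▸ List.mem_cons_self)⟩
  exact hT.2.2 u x hux (hE.induction (Relation.ReflTransGen E u) _ (fun _ _ h ih => ih.tail h)
    (fun _ => .single hEuv) x (List.mem_cons_of_mem v hx))

lemma neighborSet_eq_of_longest (hT : T.IsTreeGraph) {t : List ℕ}
    (hl : T.IsPathList (u :: v :: t))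
    (hmax : ∀ l', T.IsPathList l' → l'.length ≤ (u :: v :: t).length) :
    T.neighborSet u = {v} := by
  ext y
  rw [mem_neighborSet, Set.mem_singleton_iff]
  refine ⟨fun huy => ?_, by rintro rfl; exact (List.isChain_cons_cons.mp hl.1).1⟩
  by_contra hyv
  by_cases hyl : y ∈ u :: v :: t
  · rcases List.mem_cons.mp hyl with rfl | hyl
    · exact T.loopless _ huy
    rcases List.mem_cons.mp hyl with rfl | hyt
    · exact hyv rfl
    · exact hT.not_adj_of_isPathList hl hyt huy
  · have := hmax _ (hl.cons (T.symm _ _ huy) hyl)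
    simp at this

lemma exists_neighbors_leaves_but_one (hT : T.IsTreeGraph) (h3 : 3 ≤ T.verts.card) :
    ∃ v w, T.Adj v w ∧ 1 < T.degree v ∧ ∀ y, T.Adj v y → y ≠ w → T.degree y = 1 := by
  obtain ⟨x, hx⟩ := hT.1
  obtain ⟨y, hxy⟩ := hT.2.1.exists_adj (by omega) hx
  have hpath : T.IsPathList [x, y] :=
    ⟨List.isChain_pair.mpr hxy, by simp [ne_of_adj hxy], by simp [hx, (T.support _ _ hxy).2]⟩
  obtain ⟨l, hl, hlen, hmax⟩ := exists_longest_pathList hpath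
  rcases l with _ | ⟨c, _ | ⟨v, _ | ⟨w, t⟩⟩⟩
  · simp at hlen
  · simp at hlen
  · exfalso
    have hc := hT.neighborSet_eq_of_longest hl hmax
    have hv := hT.neighborSet_eq_of_longest hl.reverse hmax
    have hsub := hT.2.1.verts_subset (S := ↑({c, v} : Finset ℕ)) (hl.2.2 c (by simp)) (by simp)
      (by simp only [Finset.coe_insert, Finset.coe_singleton]
          rintro a (rfl | rfl) b hab
          exacts [.inr (eq_of_adj_of_neighborSet_eq hc hab),
            .inl (eq_of_adj_of_neighborSet_eq hv hab)])
    have := Finset.card_le_card (Finset.coe_subset.mp hsub)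
    have := Finset.card_le_two (a := c) (b := v)
    omega
  · have hch := hl.1
    simp only [List.isChain_cons_cons] at hch
    obtain ⟨hcv, hvw, -⟩ := hch
    have hcw : c ≠ w := fun h => (List.nodup_cons.mp hl.2.1).1 (by simp [h])
    refine ⟨v, w, hvw, ?_, fun y hvy hyw => ?_⟩
    · calc 1 < ({c, w} : Set ℕ).ncard := by rw [Set.ncard_pair hcw]; omega
        _ ≤ T.degree v := Set.ncard_le_ncard (by
            rintro a (rfl | rfl)
            exacts [T.symm _ _ hcv, hvw]) (T.neighborSet_finite v)
    by_cases hyl : y ∈ c :: v :: w :: t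
    · simp only [List.mem_cons] at hyl
      rcases hyl with rfl | rfl | rfl | hyt
      · exact degree_eq_one_of_neighborSet_eq (hT.neighborSet_eq_of_longest hl hmax)
      · exact (T.loopless _ hvy).elim
      · exact (hyw rfl).elim
      · exact (hT.not_adj_of_isPathList hl.of_cons hyt hvy).elim
    · have hyl' : y ∉ v :: w :: t := fun h => hyl (List.mem_cons_of_mem c h)
      exact degree_eq_one_of_neighborSet_eq
        (hT.neighborSet_eq_of_longest (hl.of_cons.cons (T.symm _ _ hvy) hyl') hmax)

end IsTreeGraph

section removeLeaves

variable {S : Finset ℕ}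

@[simp] lemma verts_removeVerts : (T.removeVerts S).verts = T.verts \ S := rfl

lemma card_verts_removeVerts (hS : S ⊆ T.verts) :
    (T.removeVerts S).verts.card = T.verts.card - S.card :=
  Finset.card_sdiff_of_subset hS

lemma neighborSet_removeVerts (hx : x ∉ S) :
    (T.removeVerts S).neighborSet x = T.neighborSet x \ ↑S := by
  ext y
  simp [removeVerts, neighborSet, hx]

lemma degree_removeVerts_of_ne (hS : ∀ a ∈ S, T.neighborSet a = {v}) (hx : x ∉ S) (hxv : x ≠ v) :
    (T.removeVerts S).degree x = T.degree x := by
  rw [degree, degree, neighborSet_removeVerts hx, sdiff_eq_left.mpr]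
  exact Set.disjoint_left.mpr fun a hxa haS =>
    hxv (eq_of_adj_of_neighborSet_eq (hS a haS) (T.symm _ _ hxa))

lemma degree_removeVerts_self (hS : ∀ a ∈ S, T.neighborSet a = {v}) (hvS : v ∉ S) :
    (T.removeVerts S).degree v = T.degree v - S.card := by
  have hsub : (↑S : Set ℕ) ⊆ T.neighborSet v := fun a ha =>
    T.symm _ _ (by rw [← mem_neighborSet, hS a ha]; rfl)
  rw [degree, degree, neighborSet_removeVerts hvS, Set.ncard_sdiff hsub S.finite_toSet,
    Set.ncard_coe_finset]

/-- Walks of `T` retract onto `T.removeVerts S` by sending each removed leaf to `v`. -/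
lemma IsTreeGraph.removeVerts (hT : T.IsTreeGraph) (hS : ∀ a ∈ S, T.neighborSet a = {v})
    (hv : v ∈ T.verts) (hvS : v ∉ S) : (T.removeVerts S).IsTreeGraph := by
  classical
  refine ⟨⟨v, Finset.mem_sdiff.mpr ⟨hv, hvS⟩⟩, fun x hx y hy => ?_, fun x y hxy hcyc =>
    hT.2.2 x y hxy.1 (Relation.ReflTransGen.mono (fun a b h => ⟨h.1.1, h.2⟩) _ _ hcyc)⟩
  simp only [verts_removeVerts, Finset.coe_sdiff, Set.mem_sdiff, Finset.mem_coe] at hx hy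
  let f a := if a ∈ S then v else a
  have hf := Relation.ReflTransGen.lift' (p := fun a b => (T.removeVerts S).Adj a b ∧
      a ∈ (↑(T.removeVerts S).verts : Set ℕ) ∧ b ∈ (↑(T.removeVerts S).verts : Set ℕ)) f
    (fun a b ⟨hab, ha, hb⟩ => by
      by_cases haS : a ∈ S
      · simp only [Function.onFun, f, if_pos haS, eq_of_adj_of_neighborSet_eq (hS a haS) hab,
          if_neg hvS]
        exact .refl
      by_cases hbS : b ∈ S
      · simp only [Function.onFun, f, if_pos hbS,
          eq_of_adj_of_neighborSet_eq (hS b hbS) (T.symm _ _ hab), if_neg hvS]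
        exact .refl
      simpa [Function.onFun, f, haS, hbS] using .single ⟨⟨hab, haS, hbS⟩, by simp_all⟩)
    _ _ (hT.2.1 x hx.1 y hy.1)
  simpa [Function.onFun, f, hx.2, hy.2, ReachableWithin] using hf

end removeLeaves

def IsSeriesReducedTree (T : FinGraph) : Prop :=
  T.IsTreeGraph ∧ ∀ v ∈ T.verts, T.degree v ≠ 2

lemma IsSeriesReducedTree.removeVerts {S : Finset ℕ} (hT : T.IsSeriesReducedTree)
    (hS : ∀ a ∈ S, T.neighborSet a = {v}) (hv : v ∈ T.verts) (hvS : v ∉ S)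
    (hdeg : T.degree v - S.card ≠ 2) : (T.removeVerts S).IsSeriesReducedTree := by
  refine ⟨hT.1.removeVerts hS hv hvS, fun x hx => ?_⟩
  obtain ⟨hxT, hxS⟩ := Finset.mem_sdiff.mp hx
  rcases eq_or_ne x v with rfl | hxv
  · rwa [degree_removeVerts_self hS hxS]
  · rw [degree_removeVerts_of_ne hS hxS hxv]
    exact hT.2 x hxT

lemma isStar13_of_neighborSet_eq (hc : T.Connected) (hv : v ∈ T.verts)
    (hxy : x ≠ y) (hxz : x ≠ z) (hyz : y ≠ z) (hN : T.neighborSet v = {x, y, z})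
    (hx : T.neighborSet x = {v}) (hy : T.neighborSet y = {v}) (hz : T.neighborSet z = {v}) :
    T.IsStar13 := by
  have hleaf : ∀ a ∈ ({x, y, z} : Set ℕ), T.neighborSet a = {v} := by
    rintro a (rfl | rfl | rfl) <;> assumption
  have hadj : ∀ a, T.Adj v a ↔ a ∈ ({x, y, z} : Set ℕ) := fun a => by rw [← hN]; rfl
  have hsub := hc.verts_subset (S := insert v {x, y, z}) hv (Set.mem_insert v _) (by
    rintro a (rfl | ha) b hab
    · exact .inr ((hadj b).mp hab)
    · exact .inl (eq_of_adj_of_neighborSet_eq (hleaf a ha) hab))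
  have hvx := ne_of_adj ((hadj x).mpr (by simp))
  have hvy := ne_of_adj ((hadj y).mpr (by simp))
  have hvz := ne_of_adj ((hadj z).mpr (by simp))
  refine ⟨v, x, y, z, hvx, hvy, hvz, hxy, hxz, hyz, Finset.coe_injective ?_, fun a b => ?_⟩
  · push_cast
    refine hsub.antisymm (Set.insert_subset hv ?_)
    rw [← hN]
    exact T.neighborSet_subset_verts v
  constructor
  · intro hab
    rcases hsub (mem_verts_of_adj hab) with rfl | ha
    · exact .inl ⟨rfl, (hadj b).mp hab⟩
    · exact .inr ⟨eq_of_adj_of_neighborSet_eq (hleaf a ha) hab, ha⟩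
  · rintro (⟨rfl, hb⟩ | ⟨rfl, ha⟩)
    · exact (hadj b).mpr hb
    · exact T.symm _ _ ((hadj a).mpr ha)

namespace IsSeriesReducedTree

lemma exists_leafStep_of_three_lt_degree (hT : T.IsSeriesReducedTree) (hvw : T.Adj v w)
    (hleaf : ∀ y, T.Adj v y → y ≠ w → T.degree y = 1) (hv : 3 < T.degree v) :
    ∃ T', T.LeafStep T' ∧ T'.IsSeriesReducedTree ∧ 4 ≤ T'.verts.card ∧
      T'.verts.card < T.verts.card := by
  obtain ⟨a, hva, haw⟩ : (T.neighborSet v \ {w}).Nonempty := by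
    apply Set.nonempty_of_ncard_ne_zero
    rw [Set.ncard_sdiff_singleton_of_mem (mem_neighborSet.mpr hvw)]
    rw [degree] at hv
    omega
  have ha := hleaf a hva haw
  have hvV := mem_verts_of_adj hvw
  have hcard := degree_lt_card hvV
  refine ⟨T.removeVerts {a}, .inr ⟨v, a, hv, ha, hva, rfl⟩,
    hT.removeVerts (by simpa using neighborSet_eq_of_degree_eq_one ha (T.symm _ _ hva)) hvV
      (by simpa using ne_of_adj hva) (by simp; omega), ?_⟩
  rw [card_verts_removeVerts (by simpa using mem_verts_of_adj (T.symm _ _ hva)),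
    Finset.card_singleton]
  omega

lemma isStar13_or_exists_leafStep_of_degree_eq_three (hT : T.IsSeriesReducedTree)
    (hvw : T.Adj v w) (hleaf : ∀ y, T.Adj v y → y ≠ w → T.degree y = 1) (hv : T.degree v = 3) :
    T.IsStar13 ∨ ∃ T', T.LeafStep T' ∧ T'.IsSeriesReducedTree ∧ 4 ≤ T'.verts.card ∧
      T'.verts.card < T.verts.card := by
  obtain ⟨a, b, hab, haw, hbw, hNv⟩ := exists_neighborSet_eq_of_degree_eq_three hvw hv
  have hva : T.Adj v a := by rw [← mem_neighborSet, hNv]; simp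
  have hvb : T.Adj v b := by rw [← mem_neighborSet, hNv]; simp
  have ha := hleaf a hva haw
  have hb := hleaf b hvb hbw
  have hNa := neighborSet_eq_of_degree_eq_one ha (T.symm _ _ hva)
  have hNb := neighborSet_eq_of_degree_eq_one hb (T.symm _ _ hvb)
  have hvV := mem_verts_of_adj hvw
  have hwV := mem_verts_of_adj (T.symm _ _ hvw)
  by_cases hw : T.degree w = 1
  · exact .inl (isStar13_of_neighborSet_eq hT.1.2.1 hvV (Ne.symm haw) (Ne.symm hbw) hab hNv
      (neighborSet_eq_of_degree_eq_one hw (T.symm _ _ hvw)) hNa hNb)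
  right
  have hsub : ({a, b} : Finset ℕ) ⊆ T.verts := by
    simp [Finset.insert_subset_iff, mem_verts_of_adj (T.symm _ _ hva),
      mem_verts_of_adj (T.symm _ _ hvb)]
  have hcard := card_add_degree_lt hwV hsub (by
    simp only [Finset.mem_insert, Finset.mem_singleton]
    rintro c (rfl | rfl)
    exacts [⟨haw, fun h => ne_of_adj hvw (eq_of_adj_of_neighborSet_eq hNa (T.symm _ _ h)).symm⟩,
      ⟨hbw, fun h => ne_of_adj hvw (eq_of_adj_of_neighborSet_eq hNb (T.symm _ _ h)).symm⟩])
  have hw3 : 3 ≤ T.degree w := by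
    have := hT.2 w hwV
    have := degree_pos_of_adj (T.symm _ _ hvw)
    omega
  refine ⟨T.removeVerts {a, b}, .inl ⟨v, a, b, hv, ha, hb, hab, hva, hvb, rfl⟩,
    hT.removeVerts (by simp [hNa, hNb]) hvV (by simp [ne_of_adj hva, ne_of_adj hvb])
      (by rw [Finset.card_pair hab, hv]; decide), ?_⟩
  rw [card_verts_removeVerts hsub, Finset.card_pair hab]
  rw [Finset.card_pair hab] at hcard
  omega

lemma isStar13_or_exists_leafStep (hT : T.IsSeriesReducedTree) (h4 : 4 ≤ T.verts.card) :
    T.IsStar13 ∨ ∃ T', T.LeafStep T' ∧ T'.IsSeriesReducedTree ∧ 4 ≤ T'.verts.card ∧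
      T'.verts.card < T.verts.card := by
  obtain ⟨v, w, hvw, hv1, hleaf⟩ := hT.1.exists_neighbors_leaves_but_one (by omega)
  have := hT.2 v (mem_verts_of_adj hvw)
  rcases (show T.degree v = 3 ∨ 3 < T.degree v by omega) with hv | hv
  · exact hT.isStar13_or_exists_leafStep_of_degree_eq_three hvw hleaf hv
  · exact .inr (hT.exists_leafStep_of_three_lt_degree hvw hleaf hv)

end IsSeriesReducedTree

end FinGraph

theorem tree_reduces_to_star (T : FinGraph) (hT : FinGraph.IsTreeGraph T)
    (hcard : 4 ≤ T.verts.card) (hdeg : ∀ v ∈ T.verts, T.degree v ≠ 2) :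
    ∃ S, Relation.ReflTransGen FinGraph.LeafStep T S ∧ FinGraph.IsStar13 S := by
  have hT' : T.IsSeriesReducedTree := ⟨hT, hdeg⟩
  clear hT hdeg
  induction hn : T.verts.card using Nat.strong_induction_on generalizing T with
  | _ n ih =>
    rcases hT'.isStar13_or_exists_leafStep hcard with hstar | ⟨T', hstep, hT'', hcard', hlt⟩
    · exact ⟨T, .refl, hstar⟩
    · obtain ⟨S, hS, hstar⟩ := ih _ (hn ▸ hlt) T' hcard' hT'' rfl
      exact ⟨S, .head hstep hS, hstar⟩
end

section
/- Every D3-reducible graph is 3-vertex-connected. -/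
/-!
Reversing a D3 reduction preserves 3-connectivity, and `K₄` is 3-connected, so the theorem
follows by induction along the reduction sequence, read backwards from `K₄`.

To reverse a step `G ⟶ H`, fix two vertices `x, y` to be deleted from `G`. Deleting suitable
images of them from `H` leaves a connected graph, whose walks lift to walks of `G - {x, y}`:
the contracted vertex `t` of a D3a step is expanded back into its triangle, the new edge `pr` of
a D3b step into the path `p q r`. The few vertices of `G - {x, y}` missed by the lift reach it
in one or two steps, because their degree is three.
-/

namespace FinGraph

variable {G H : FinGraph} {S T : Set ℕ} {u v : ℕ}

theorem Adj.ne (h : G.Adj u v) : u ≠ v := fun huv => G.loopless v (huv ▸ h)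

theorem mem_coe_sdiff_pair {s : Finset ℕ} {x y a : ℕ} :
    a ∈ (↑s \ {x, y} : Set ℕ) ↔ a ∈ s ∧ a ≠ x ∧ a ≠ y := by
  simp only [Set.mem_sdiff, Finset.mem_coe, Set.mem_insert_iff, Set.mem_singleton_iff, not_or]

theorem ReachableWithin.of_adj (h : G.Adj u v) (hu : u ∈ S) (hv : v ∈ S) :
    G.ReachableWithin S u v :=
  Relation.ReflTransGen.single ⟨h, hu, hv⟩

theorem ReachableWithin.trans {w : ℕ} (huv : G.ReachableWithin S u v)
    (hvw : G.ReachableWithin S v w) : G.ReachableWithin S u w :=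
  Relation.ReflTransGen.trans huv hvw

theorem ReachableWithin.symm (h : G.ReachableWithin S u v) : G.ReachableWithin S v u := by
  induction h with
  | refl => exact .refl
  | tail _ hab ih => exact Relation.ReflTransGen.head ⟨G.symm _ _ hab.1, hab.2.2, hab.2.1⟩ ih

theorem ReachableWithin.map (f : ℕ → ℕ)
    (hedge : ∀ a b, H.Adj a b → a ∈ T → b ∈ T → G.ReachableWithin S (f a) (f b))
    (h : H.ReachableWithin T u v) : G.ReachableWithin S (f u) (f v) := by
  induction h with
  | refl => exact .refl
  | tail _ hab ih => exact ih.trans (hedge _ _ hab.1 hab.2.1 hab.2.2)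

theorem ConnectedOn.of_map (f : ℕ → ℕ) (hH : H.ConnectedOn T)
    (hedge : ∀ a b, H.Adj a b → a ∈ T → b ∈ T → G.ReachableWithin S (f a) (f b))
    (hcover : ∀ u ∈ S, ∃ a ∈ T, G.ReachableWithin S u (f a)) : G.ConnectedOn S := by
  intro u hu v hv
  obtain ⟨a, ha, hua⟩ := hcover u hu
  obtain ⟨b, hb, hvb⟩ := hcover v hv
  exact hua.trans ((ReachableWithin.map f hedge (hH a ha b hb)).trans hvb.symm)

theorem exists_adj_ne_ne_of_two_lt_degree (hv : 2 < G.degree v) (a b : ℕ) :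
    ∃ w, G.Adj v w ∧ w ≠ a ∧ w ≠ b := by
  by_contra! hsub
  have : G.degree v ≤ ({a, b} : Set ℕ).ncard :=
    Set.ncard_le_ncard fun w hw => by simpa [or_iff_not_imp_left] using hsub w hw
  have := Set.ncard_insert_le a {b}
  rw [Set.ncard_singleton] at this
  omega

theorem IsK4.threeConnected (h : G.IsK4) : G.ThreeConnected := by
  refine ⟨by rw [h.1]; omega, fun x y u hu v hv => ?_⟩
  obtain rfl | huv := eq_or_ne u v
  · exact .refl
  · exact .of_adj (h.2 u hu.1 v hv.1 huv) hu hv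

section D3a

variable {p q r p' q' r' : ℕ}

theorem D3aConfig.reachableWithin_of_mem_triangle (h : G.D3aConfig p q r p' q' r') {a b : ℕ}
    (ha : a = p ∨ a = q ∨ a = r) (hb : b = p ∨ b = q ∨ b = r) (haS : a ∈ S) (hbS : b ∈ S) :
    G.ReachableWithin S a b := by
  obtain ⟨-, -, -, hpq, hqr, hpr, -⟩ := h
  obtain rfl | hab := eq_or_ne a b
  · exact .refl
  refine .of_adj ?_ haS hbS
  rcases ha with rfl | rfl | rfl <;> rcases hb with rfl | rfl | rfl <;>
    first | exact absurd rfl hab | assumption | exact G.symm _ _ ‹_›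

theorem D3aConfig.exists_adj_of_outer (h : G.D3aConfig p q r p' q' r') {b : ℕ}
    (hb : b = p' ∨ b = q' ∨ b = r') :
    ¬(b = p ∨ b = q ∨ b = r) ∧ ∃ w, (w = p ∨ w = q ∨ w = r) ∧ G.Adj w b := by
  obtain ⟨-, -, -, -, -, -, hpp', hqq', hrr', hp', hq', hr', -⟩ := h
  rcases hb with rfl | rfl | rfl
  exacts [⟨hp', p, by simp, hpp'⟩, ⟨hq', q, by simp, hqq'⟩, ⟨hr', r, by simp, hrr'⟩]

theorem D3aConfig.exists_adj_outer_ne_ne (h : G.D3aConfig p q r p' q' r') (x y : ℕ) :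
    ∃ c c', (c = p ∨ c = q ∨ c = r) ∧ ¬(c' = p ∨ c' = q ∨ c' = r) ∧ G.Adj c c' ∧
      (c ≠ x ∧ c ≠ y) ∧ c' ≠ x ∧ c' ≠ y := by
  have hp' := (h.exists_adj_of_outer (b := p') (by simp)).1
  have hq' := (h.exists_adj_of_outer (b := q') (by simp)).1
  have hr' := (h.exists_adj_of_outer (b := r') (by simp)).1
  obtain ⟨-, -, -, hpq, hqr, hpr, hpp', hqq', hrr', -, -, -, hp'q', hp'r', hq'r'⟩ := h
  have := hpq.ne; have := hqr.ne; have := hpr.ne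
  -- the edges `pp', qq', rr'` are disjoint, so one of them avoids both `x` and `y`
  have : ((p ≠ x ∧ p ≠ y) ∧ p' ≠ x ∧ p' ≠ y) ∨ ((q ≠ x ∧ q ≠ y) ∧ q' ≠ x ∧ q' ≠ y) ∨
      ((r ≠ x ∧ r ≠ y) ∧ r' ≠ x ∧ r' ≠ y) := by grind
  rcases this with h | h | h
  exacts [⟨p, p', by simp, hp', hpp', h⟩, ⟨q, q', by simp, hq', hqq', h⟩,
    ⟨r, r', by simp, hr', hrr', h⟩]

end D3a

theorem D3a.card_le (hGH : G.D3a H) : H.verts.card ≤ G.verts.card := by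
  obtain ⟨p, q, r, -, -, -, t, ⟨-, -, -, hpq, -⟩, -, hverts, -⟩ := hGH
  calc H.verts.card ≤ (G.verts \ {p, q, r}).card + 1 := hverts ▸ Finset.card_union_le _ _
    _ ≤ G.verts.card := Finset.card_lt_card
      ((Finset.ssubset_iff_of_subset Finset.sdiff_subset).2 ⟨p, (G.support _ _ hpq).1, by simp⟩)

theorem D3b.card_le (hGH : G.D3b H) : H.verts.card ≤ G.verts.card := by
  obtain ⟨p, q, r, s, -, hverts, -⟩ := hGH
  exact hverts ▸ Finset.card_le_card Finset.sdiff_subset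

theorem D3Step.card_le (hGH : G.D3Step H) : H.verts.card ≤ G.verts.card :=
  hGH.elim D3a.card_le D3b.card_le

theorem D3a.connectedOn_sdiff_pair (hGH : G.D3a H)
    (hH : ∀ x y, H.ConnectedOn (↑H.verts \ {x, y})) (x y : ℕ) :
    G.ConnectedOn (↑G.verts \ {x, y}) := by
  obtain ⟨p, q, r, p', q', r', t, hcfg, ht, hverts, hadj⟩ := hGH
  simp only [Set.mem_insert_iff, Set.mem_singleton_iff] at hadj
  set S : Set ℕ := ↑G.verts \ {x, y}
  set tri : ℕ → Prop := fun a => a = p ∨ a = q ∨ a = r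
  set g : ℕ → ℕ := fun a => if tri a then t else a
  have hT : ∀ a ∈ G.verts, ¬tri a → (a ∈ (↑H.verts \ {g x, g y} : Set ℕ) ↔ a ∈ S) := by
    intro a ha hat
    have : a ≠ t := fun h => ht (h ▸ ha)
    simp only [S, g, tri, mem_coe_sdiff_pair, hverts, Finset.mem_union, Finset.mem_sdiff] at hat ⊢
    split_ifs <;> simp_all <;> omega
  obtain ⟨c, c', hc, hc', hcc', hcxy, hc'xy⟩ := hcfg.exists_adj_outer_ne_ne x y
  obtain ⟨hcG, hc'G⟩ := G.support _ _ hcc'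
  have hcS : c ∈ S := mem_coe_sdiff_pair.2 ⟨hcG, hcxy⟩
  have hc'S : c' ∈ S := mem_coe_sdiff_pair.2 ⟨hc'G, hc'xy⟩
  have hf : ∀ a ∈ G.verts, (if a = t then c else a) = a :=
    fun a ha => if_neg fun h : a = t => ht (h ▸ ha)
  refine (hH (g x) (g y)).of_map (fun a => if a = t then c else a) ?_ (fun u hu => ?_)
  · -- if `t` survives, `x, y` miss the triangle, through which `c` reaches every outer neighbour
    have hout : ∀ b, t ∈ (↑H.verts \ {g x, g y} : Set ℕ) → (b = p' ∨ b = q' ∨ b = r') →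
        b ∈ (↑H.verts \ {g x, g y} : Set ℕ) → G.ReachableWithin S c b := by
      intro b htT hb hbT
      obtain ⟨hbtri, w, hw, hwb⟩ := hcfg.exists_adj_of_outer hb
      have hx : ¬tri x := fun hx => (mem_coe_sdiff_pair.1 htT).2.1 (if_pos hx).symm
      have hy : ¬tri y := fun hy => (mem_coe_sdiff_pair.1 htT).2.2 (if_pos hy).symm
      have hwS : w ∈ S :=
        mem_coe_sdiff_pair.2 ⟨(G.support _ _ hwb).1, fun h => hx (h ▸ hw), fun h => hy (h ▸ hw)⟩
      exact (hcfg.reachableWithin_of_mem_triangle hc hw hcS hwS).trans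
        (.of_adj hwb hwS ((hT b (G.support _ _ hwb).2 hbtri).1 hbT))
    intro a b hab ha hb
    rcases (hadj a b).1 hab with ⟨hab, ha', hb'⟩ | ⟨rfl, hb'⟩ | ⟨rfl, ha'⟩
    · obtain ⟨haG, hbG⟩ := G.support _ _ hab
      rw [hf a haG, hf b hbG]
      exact .of_adj hab ((hT a haG ha').1 ha) ((hT b hbG hb').1 hb)
    · obtain ⟨-, w, -, hwb⟩ := hcfg.exists_adj_of_outer hb'
      rw [if_pos rfl, hf b (G.support _ _ hwb).2]
      exact hout b ha hb' hb
    · obtain ⟨-, w, -, hwa⟩ := hcfg.exists_adj_of_outer ha'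
      rw [if_pos rfl, hf a (G.support _ _ hwa).2]
      exact (hout a hb ha' ha).symm
  · by_cases hu' : tri u
    · refine ⟨c', (hT c' hc'G hc').2 hc'S, ?_⟩
      rw [hf c' hc'G]
      exact (hcfg.reachableWithin_of_mem_triangle hu' hc hu hcS).trans (.of_adj hcc' hcS hc'S)
    · exact ⟨u, (hT u hu.1 hu').2 hu, by rw [hf u hu.1]; exact .refl⟩

theorem D3b.connectedOn_sdiff_pair (hGH : G.D3b H)
    (hH : ∀ x y, H.ConnectedOn (↑H.verts \ {x, y})) (x y : ℕ) :
    G.ConnectedOn (↑G.verts \ {x, y}) := by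
  obtain ⟨p, q, r, -, ⟨hp, hq, -, hpq, hqr, -, -, -, -, -⟩, hverts, hadj⟩ := hGH
  have hmem : ∀ a, a ∈ H.verts ↔ a ∈ G.verts ∧ a ≠ q := by simp [hverts]
  by_cases hqX : q ≠ x ∧ q ≠ y
  · -- an edge `pr` of `H` is the path `p q r` of `G`
    have hqS : q ∈ (↑G.verts \ {x, y} : Set ℕ) :=
      mem_coe_sdiff_pair.2 ⟨(G.support _ _ hqr).1, hqX⟩
    refine (hH x y).of_map id (fun a b hab ha hb => ?_) (fun u hu => ?_)
    · rw [mem_coe_sdiff_pair, hmem] at ha hb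
      have haS := mem_coe_sdiff_pair.2 ⟨ha.1.1, ha.2⟩
      have hbS := mem_coe_sdiff_pair.2 ⟨hb.1.1, hb.2⟩
      rcases (hadj a b).1 hab with ⟨hab, -, -⟩ | ⟨rfl, rfl⟩ | ⟨rfl, rfl⟩
      · exact .of_adj hab haS hbS
      · exact (ReachableWithin.of_adj hpq haS hqS).trans (.of_adj hqr hqS hbS)
      · exact (ReachableWithin.of_adj (G.symm _ _ hqr) haS hqS).trans
          (.of_adj (G.symm _ _ hpq) hqS hbS)
    · obtain rfl | huq := eq_or_ne u q
      · obtain ⟨w, huw, hwx, hwy⟩ :=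
          exists_adj_ne_ne_of_two_lt_degree (by omega : 2 < G.degree u) x y
        have hwG := (G.support _ _ huw).2
        exact ⟨w, mem_coe_sdiff_pair.2 ⟨(hmem w).2 ⟨hwG, huw.ne.symm⟩, hwx, hwy⟩,
          .of_adj huw hu (mem_coe_sdiff_pair.2 ⟨hwG, hwx, hwy⟩)⟩
      · rw [mem_coe_sdiff_pair] at hu
        exact ⟨u, mem_coe_sdiff_pair.2 ⟨(hmem u).2 ⟨hu.1, huq⟩, hu.2⟩, .refl⟩
  · -- `q` is one of `x, y`; deleting `p` from `H` as well disposes of the new edge `pr`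
    obtain ⟨z, hz⟩ : ∃ z, ∀ a, a ≠ x ∧ a ≠ y ↔ a ≠ q ∧ a ≠ z :=
      ⟨if q = x then y else x, fun a => by split_ifs <;> omega⟩
    refine (hH z p).of_map id (fun a b hab ha hb => ?_) (fun u hu => ?_)
    · rw [mem_coe_sdiff_pair, hmem] at ha hb
      rcases (hadj a b).1 hab with ⟨hab, -, -⟩ | ⟨rfl, -⟩ | ⟨-, rfl⟩
      · exact .of_adj hab (mem_coe_sdiff_pair.2 ⟨ha.1.1, (hz a).2 ⟨ha.1.2, ha.2.1⟩⟩)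
          (mem_coe_sdiff_pair.2 ⟨hb.1.1, (hz b).2 ⟨hb.1.2, hb.2.1⟩⟩)
      · exact absurd rfl ha.2.2
      · exact absurd rfl hb.2.2
    · rw [mem_coe_sdiff_pair, hz] at hu
      obtain rfl | hup := eq_or_ne u p
      · obtain ⟨w, huw, hwq, hwz⟩ :=
          exists_adj_ne_ne_of_two_lt_degree (by omega : 2 < G.degree u) q z
        have hwG := (G.support _ _ huw).2
        exact ⟨w, mem_coe_sdiff_pair.2 ⟨(hmem w).2 ⟨hwG, hwq⟩, hwz, huw.ne.symm⟩,
          .of_adj huw (mem_coe_sdiff_pair.2 ⟨hu.1, (hz u).2 hu.2⟩)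
            (mem_coe_sdiff_pair.2 ⟨hwG, (hz w).2 ⟨hwq, hwz⟩⟩)⟩
      · exact ⟨u, mem_coe_sdiff_pair.2 ⟨(hmem u).2 ⟨hu.1, hu.2.1⟩, hu.2.2, hup⟩, .refl⟩

theorem ThreeConnected.of_d3Step (hGH : G.D3Step H) (hH : H.ThreeConnected) :
    G.ThreeConnected :=
  ⟨hH.1.trans_le hGH.card_le,
    hGH.elim (fun h => h.connectedOn_sdiff_pair hH.2) (fun h => h.connectedOn_sdiff_pair hH.2)⟩

end FinGraph

theorem d3_reducible_three_connected (G : FinGraph) (h : G.D3Reducible) :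
    G.ThreeConnected := by
  obtain ⟨H, hGH, hK4⟩ := h
  induction hGH using Relation.ReflTransGen.head_induction_on with
  | refl => exact hK4.threeConnected
  | head hstep _ ih => exact FinGraph.ThreeConnected.of_d3Step hstep ih
end
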